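/- Let R, S ≥ 1 and let p be an R×S probability matrix. Suppose that for all nonempty subsets v₁ ⊆ Fin R and v₂ ⊆ Fin S with p_{ij} = 0 for all (i,j) ∈ v₁ × v₂, one has |v₁|/R + |v₂|/S ≤ 1, and that whenever equality |v₁|/R + |v₂|/S = 1 holds for such a pair, p also vanishes identically on the complementary rectangle (Fin R ∖ v₁) × (Fin S ∖ v₂). Then there exists an R×S probability matrix q with uniform margins and Supp(q) = Supp(p). -/

import Mathlib

theorem stmt10_matching (R S : ℕ) (hR : 1 ≤ R) (hS : 1 ≤ S)
    (p : Fin R → Fin S → ℝ)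
    (key : ∀ v₁ : Finset (Fin R), v₁.Nonempty →
      S * v₁.card ≤ R * (Finset.univ.filter fun j => ∃ i ∈ v₁, 0 < p i j).card)
    (key2 : ∀ (i0 : Fin R) (j0 : Fin S), 0 < p i0 j0 →
      ∀ v₁ : Finset (Fin R), v₁.Nonempty → i0 ∉ v₁ → (∃ i ∈ v₁, 0 < p i j0) →
      S * v₁.card + 1 ≤ R * (Finset.univ.filter fun j => ∃ i ∈ v₁, 0 < p i j).card)
    (i0 : Fin R) (j0 : Fin S) (h0 : 0 < p i0 j0) :
    ∃ q : Fin R → Fin S → ℝ, (∀ i j, 0 ≤ q i j) ∧ (∀ i, ∑ j, q i j = 1 / R) ∧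
      (∀ j, ∑ i, q i j = 1 / S) ∧ (∀ i j, 0 < q i j → 0 < p i j) ∧ 0 < q i0 j0 := by
  classical
  have k0 : Fin S := ⟨0, hS⟩
  have l0 : Fin R := ⟨0, hR⟩
  set r : Fin R × Fin S → Finset (Fin S × Fin R) := fun x =>
    if x = (i0, k0) then {(j0, l0)}
    else Finset.univ.filter fun y => 0 < p x.1 y.1 ∧ y ≠ (j0, l0) with hr
  have hall : ∀ W : Finset (Fin R × Fin S), W.card ≤ (W.biUnion r).card := by
    intro W
    have hBud : (i0, k0) ∈ W → (j0, l0) ∈ W.biUnion r := fun h =>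
      Finset.mem_biUnion.mpr ⟨(i0, k0), h, by rw [hr]; simp⟩
    by_cases hW : (W.erase (i0, k0)).Nonempty
    · set v₁ : Finset (Fin R) := (W.erase (i0, k0)).image Prod.fst with hv₁
      have hv₁ne : v₁.Nonempty := hW.image _
      set N : Finset (Fin S) := Finset.univ.filter fun j => ∃ i ∈ v₁, 0 < p i j with hN
      have hBsub : (N ×ˢ (Finset.univ : Finset (Fin R))).erase (j0, l0) ⊆ W.biUnion r := by
        intro y hy
        obtain ⟨hy1, hy2⟩ := Finset.mem_erase.mp hy
        rw [Finset.mem_product] at hy2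
        obtain ⟨i, hi, hpij⟩ := (Finset.mem_filter.mp hy2.1).2
        obtain ⟨x, hx, hxi⟩ := Finset.mem_image.mp hi
        obtain ⟨hxne, hxW⟩ := Finset.mem_erase.mp hx
        refine Finset.mem_biUnion.mpr ⟨x, hxW, ?_⟩
        rw [hr]
        simp only [if_neg hxne, Finset.mem_filter, Finset.mem_univ, true_and]
        exact ⟨by rw [hxi]; exact hpij, hy1⟩
      have hWsub : W ⊆ insert (i0, k0) (v₁ ×ˢ (Finset.univ : Finset (Fin S))) := by
        intro x hx
        by_cases hx0 : x = (i0, k0)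
        · simp [hx0]
        · refine Finset.mem_insert_of_mem ?_
          rw [Finset.mem_product]
          exact ⟨Finset.mem_image.mpr ⟨x, Finset.mem_erase.mpr ⟨hx0, hx⟩, rfl⟩,
            Finset.mem_univ _⟩
      have hNcard : (N ×ˢ (Finset.univ : Finset (Fin R))).card = N.card * R := by
        simp [Finset.card_product]
      have hVcard : (v₁ ×ˢ (Finset.univ : Finset (Fin S))).card = v₁.card * S := by
        simp [Finset.card_product]
      have hkey := key v₁ hv₁ne
      rw [← hN] at hkey
      -- lower bounds on (W.biUnion r).card
      have hlow1 : N.card * R - 1 ≤ (W.biUnion r).card := by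
        calc N.card * R - 1 = (N ×ˢ (Finset.univ : Finset (Fin R))).card - 1 := by rw [hNcard]
          _ ≤ ((N ×ˢ (Finset.univ : Finset (Fin R))).erase (j0, l0)).card :=
              Finset.pred_card_le_card_erase
          _ ≤ _ := Finset.card_le_card hBsub
      have hlow2 : (i0, k0) ∈ W → N.card * R - 1 + 1 ≤ (W.biUnion r).card := by
        intro hmem
        have hsub2 : insert (j0, l0) ((N ×ˢ (Finset.univ : Finset (Fin R))).erase (j0, l0))
            ⊆ W.biUnion r := Finset.insert_subset (hBud hmem) hBsub
        calc N.card * R - 1 + 1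
            ≤ ((N ×ˢ (Finset.univ : Finset (Fin R))).erase (j0, l0)).card + 1 := by
              have := Finset.pred_card_le_card_erase
                (s := N ×ˢ (Finset.univ : Finset (Fin R))) (a := (j0, l0))
              omega
          _ = (insert (j0, l0) ((N ×ˢ (Finset.univ : Finset (Fin R))).erase (j0, l0))).card :=
              (Finset.card_insert_of_notMem (Finset.notMem_erase _ _)).symm
          _ ≤ _ := Finset.card_le_card hsub2
      have hup1 : W.card ≤ v₁.card * S + 1 := by
        calc W.card ≤ (insert (i0, k0) (v₁ ×ˢ (Finset.univ : Finset (Fin S)))).card :=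
              Finset.card_le_card hWsub
          _ ≤ (v₁ ×ˢ (Finset.univ : Finset (Fin S))).card + 1 := Finset.card_insert_le _ _
          _ = v₁.card * S + 1 := by rw [hVcard]
      by_cases hi0 : i0 ∈ v₁
      · -- then j0 ∈ N
        have hj0 : j0 ∈ N := by
          rw [hN]; simp only [Finset.mem_filter, Finset.mem_univ, true_and]
          exact ⟨i0, hi0, h0⟩
        have hup3 : W.card ≤ v₁.card * S := by
          have : insert (i0, k0) (v₁ ×ˢ (Finset.univ : Finset (Fin S)))
              = v₁ ×ˢ (Finset.univ : Finset (Fin S)) :=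
            Finset.insert_eq_self.mpr (Finset.mem_product.mpr ⟨hi0, Finset.mem_univ _⟩)
          calc W.card ≤ _ := Finset.card_le_card hWsub
            _ = v₁.card * S := by rw [this, hVcard]
        by_cases hmem : (i0, k0) ∈ W
        · have := hlow2 hmem
          have hb1 : 1 ≤ N.card * R :=
            Nat.one_le_iff_ne_zero.mpr (by
              have : 0 < N.card * R :=
                Nat.mul_pos (Finset.card_pos.mpr ⟨j0, hj0⟩) (by omega)
              omega)
          have hcomm1 : S * v₁.card = v₁.card * S := Nat.mul_comm _ _
          have hcomm2 : R * N.card = N.card * R := Nat.mul_comm _ _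
          omega
        · have hup4 : W.card ≤ v₁.card * S - 1 := by
            have hsub : W ⊆ (v₁ ×ˢ (Finset.univ : Finset (Fin S))).erase (i0, k0) := by
              intro x hx
              refine Finset.mem_erase.mpr ⟨fun hxx => hmem (hxx ▸ hx), ?_⟩
              have := hWsub hx
              rcases Finset.mem_insert.mp this with h | h
              · exact absurd (h ▸ hx) hmem
              · exact h
            calc W.card ≤ _ := Finset.card_le_card hsub
              _ = v₁.card * S - 1 := by
                rw [Finset.card_erase_of_mem
                  (Finset.mem_product.mpr ⟨hi0, Finset.mem_univ _⟩), hVcard]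
          have hcomm1 : S * v₁.card = v₁.card * S := Nat.mul_comm _ _
          have hcomm2 : R * N.card = N.card * R := Nat.mul_comm _ _
          omega
      · -- i0 ∉ v₁
        have hup2 : (i0, k0) ∉ W → W.card ≤ v₁.card * S := by
          intro hmem
          have hsub : W ⊆ v₁ ×ˢ (Finset.univ : Finset (Fin S)) := by
            intro x hx
            rcases Finset.mem_insert.mp (hWsub hx) with h | h
            · exact absurd (h ▸ hx) hmem
            · exact h
          calc W.card ≤ _ := Finset.card_le_card hsub
            _ = v₁.card * S := hVcard
        by_cases hj0 : j0 ∈ N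
        · have hkey2 : S * v₁.card + 1 ≤ R * N.card := by
            obtain ⟨i, hi, hpij⟩ := (Finset.mem_filter.mp (hN ▸ hj0)).2
            have := key2 i0 j0 h0 v₁ hv₁ne hi0 ⟨i, hi, hpij⟩
            rwa [← hN] at this
          have hcomm1 : S * v₁.card = v₁.card * S := Nat.mul_comm _ _
          have hcomm2 : R * N.card = N.card * R := Nat.mul_comm _ _
          by_cases hmem : (i0, k0) ∈ W
          · have := hlow2 hmem
            omega
          · have := hup2 hmem
            omega
        · -- j0 ∉ N : erase does nothing
          have hlow3 : N.card * R ≤ (W.biUnion r).card := by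
            have herase : (N ×ˢ (Finset.univ : Finset (Fin R))).erase (j0, l0)
                = N ×ˢ (Finset.univ : Finset (Fin R)) :=
              Finset.erase_eq_of_notMem (by
                rw [Finset.mem_product]; exact fun h => hj0 h.1)
            calc N.card * R = _ := hNcard.symm
              _ = ((N ×ˢ (Finset.univ : Finset (Fin R))).erase (j0, l0)).card := by
                  rw [herase]
              _ ≤ _ := Finset.card_le_card hBsub
          have hlow4 : (i0, k0) ∈ W → N.card * R + 1 ≤ (W.biUnion r).card := by
            intro hmem
            have herase : (N ×ˢ (Finset.univ : Finset (Fin R))).erase (j0, l0)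
                = N ×ˢ (Finset.univ : Finset (Fin R)) :=
              Finset.erase_eq_of_notMem (by
                rw [Finset.mem_product]; exact fun h => hj0 h.1)
            have hsub2 : insert (j0, l0) ((N ×ˢ (Finset.univ : Finset (Fin R))).erase (j0, l0))
                ⊆ W.biUnion r := Finset.insert_subset (hBud hmem) hBsub
            calc N.card * R + 1
                = (insert (j0, l0) ((N ×ˢ (Finset.univ : Finset (Fin R))).erase (j0, l0))).card := by
                  rw [Finset.card_insert_of_notMem (Finset.notMem_erase _ _), herase, hNcard]
              _ ≤ _ := Finset.card_le_card hsub2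
          have hcomm1 : S * v₁.card = v₁.card * S := Nat.mul_comm _ _
          have hcomm2 : R * N.card = N.card * R := Nat.mul_comm _ _
          by_cases hmem : (i0, k0) ∈ W
          · have := hlow4 hmem
            omega
          · have := hup2 hmem
            omega
    · rw [Finset.not_nonempty_iff_eq_empty, Finset.erase_eq_empty_iff] at hW
      rcases hW with h | h
      · simp [h]
      · have hb : (j0, l0) ∈ W.biUnion r := by
          refine Finset.mem_biUnion.mpr ⟨(i0, k0), ?_, ?_⟩
          · rw [h]; exact Finset.mem_singleton_self _
          · rw [hr]; simp
        have h1 : 1 ≤ (W.biUnion r).card := Finset.card_pos.mpr ⟨(j0, l0), hb⟩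
        have h2 : W.card = 1 := by rw [h]; simp
        omega
  obtain ⟨f, hinj, hmem⟩ := (Finset.all_card_le_biUnion_card_iff_exists_injective r).mp hall
  have hbij : Function.Bijective f := by
    rw [Fintype.bijective_iff_injective_and_card]
    exact ⟨hinj, by simp [Nat.mul_comm]⟩
  have hfi0 : f (i0, k0) = (j0, l0) := by
    have := hmem (i0, k0)
    rw [hr] at this
    simpa using this
  have hsupp : ∀ x : Fin R × Fin S, 0 < p x.1 (f x).1 := by
    intro x
    have hx := hmem x
    by_cases h : x = (i0, k0)
    · subst h
      rw [hfi0]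
      exact h0
    · rw [hr] at hx
      simp only [if_neg h, Finset.mem_filter] at hx
      exact hx.2.1
  have hR0 : (0:ℝ) < R := by exact_mod_cast hR
  have hS0 : (0:ℝ) < S := by exact_mod_cast hS
  refine ⟨fun i j => ((Finset.univ.filter fun k => (f (i, k)).1 = j).card : ℝ) / (R * S),
    ?_, ?_, ?_, ?_, ?_⟩
  · intro i j
    positivity
  · intro i
    rw [← Finset.sum_div, ← Nat.cast_sum]
    have hsum : ∑ j, (Finset.univ.filter fun k => (f (i, k)).1 = j).card = S := by
      have := Finset.card_eq_sum_card_fiberwise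
        (f := fun k : Fin S => (f (i, k)).1) (s := Finset.univ) (t := Finset.univ)
        (fun x _ => Finset.mem_univ _)
      simpa using this.symm
    rw [hsum]
    rw [div_eq_div_iff (by positivity) (by positivity)]
    ring
  · intro j
    rw [← Finset.sum_div, ← Nat.cast_sum]
    have h1 : (Finset.univ.filter fun x : Fin R × Fin S => (f x).1 = j).card
        = ∑ i, (Finset.univ.filter fun k => (f (i, k)).1 = j).card := by
      rw [Finset.card_eq_sum_card_fiberwise (f := Prod.fst)
        (t := Finset.univ) (fun x _ => Finset.mem_univ _)]
      refine Finset.sum_congr rfl fun i _ => ?_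
      refine Finset.card_nbij' Prod.snd (fun k => (i, k)) ?_ ?_ ?_ ?_
      · intro x hx
        simp only [Finset.mem_coe, Finset.mem_filter, Finset.mem_univ, true_and] at hx ⊢
        rw [← hx.2, Prod.mk.eta]
        exact hx.1
      · intro k hk
        simp only [Finset.mem_filter, Finset.mem_univ, true_and] at hk ⊢
        simpa using hk
      · intro x hx
        simp only [Finset.mem_coe, Finset.mem_filter, Finset.mem_univ, true_and] at hx
        exact Prod.ext hx.2.symm rfl
      · intro k hk
        rfl
    have h2 : (Finset.univ.filter fun x : Fin R × Fin S => (f x).1 = j).card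
        = (Finset.univ.filter fun y : Fin S × Fin R => y.1 = j).card := by
      refine Finset.card_equiv (Equiv.ofBijective f hbij) fun x => ?_
      simp [Equiv.ofBijective]
    have h3 : (Finset.univ.filter fun y : Fin S × Fin R => y.1 = j).card = R := by
      have : (Finset.univ.filter fun y : Fin S × Fin R => y.1 = j)
          = {j} ×ˢ (Finset.univ : Finset (Fin R)) := by
        ext y
        simp only [Finset.mem_filter, Finset.mem_univ, true_and, Finset.mem_product,
          Finset.mem_singleton, and_true]
      rw [this]
      simp
    rw [← h1, h2, h3]
    rw [div_eq_div_iff (by positivity) (by positivity)]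
    ring
  · intro i j hq
    have hcard : 0 < (Finset.univ.filter fun k => (f (i, k)).1 = j).card := by
      by_contra h
      push_neg at h
      interval_cases hc : (Finset.univ.filter fun k => (f (i, k)).1 = j).card
      simp [hc] at hq
    obtain ⟨k, hk⟩ := Finset.card_pos.mp hcard
    have := hsupp (i, k)
    rwa [(Finset.mem_filter.mp hk).2] at this
  · have hk0 : k0 ∈ (Finset.univ.filter fun k => (f (i0, k)).1 = j0) := by
      simp [hfi0]
    have : 0 < (Finset.univ.filter fun k => (f (i0, k)).1 = j0).card :=
      Finset.card_pos.mpr ⟨k0, hk0⟩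
    apply div_pos _ (by positivity)
    exact_mod_cast this
/-- If every zero rectangle `v₁ × v₂` of the probability matrix `p`
satisfies `|v₁|/R + |v₂|/S ≤ 1`, and whenever equality holds `p` also vanishes on the
complementary rectangle, then there is a probability matrix `q` with uniform margins
and the same support as `p`. -/
theorem stmt_10 (R S : ℕ) (hR : 1 ≤ R) (hS : 1 ≤ S)
    (p : Fin R → Fin S → ℝ)
    (hpnn : ∀ i j, 0 ≤ p i j) (hpsum : ∑ i, ∑ j, p i j = 1)
    (hrect : ∀ (v₁ : Finset (Fin R)) (v₂ : Finset (Fin S)), v₁.Nonempty → v₂.Nonempty →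
      (∀ i ∈ v₁, ∀ j ∈ v₂, p i j = 0) →
      (v₁.card : ℝ) / R + (v₂.card : ℝ) / S ≤ 1)
    (heq : ∀ (v₁ : Finset (Fin R)) (v₂ : Finset (Fin S)), v₁.Nonempty → v₂.Nonempty →
      (∀ i ∈ v₁, ∀ j ∈ v₂, p i j = 0) →
      (v₁.card : ℝ) / R + (v₂.card : ℝ) / S = 1 →
      ∀ i ∉ v₁, ∀ j ∉ v₂, p i j = 0) :
    ∃ q : Fin R → Fin S → ℝ,
      (∀ i j, 0 ≤ q i j) ∧ (∑ i, ∑ j, q i j = 1) ∧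
      (∀ i, ∑ j, q i j = 1 / R) ∧ (∀ j, ∑ i, q i j = 1 / S) ∧
      (∀ i j, 0 < q i j ↔ 0 < p i j) := by
  classical
  have hR0 : (0:ℝ) < R := by exact_mod_cast hR
  have hS0 : (0:ℝ) < S := by exact_mod_cast hS
  -- zero entries off the "neighborhood"
  have hzero : ∀ (v₁ : Finset (Fin R)),
      ∀ i ∈ v₁, ∀ j ∈ (Finset.univ.filter fun j => ∃ i ∈ v₁, 0 < p i j)ᶜ, p i j = 0 := by
    intro v₁ i hi j hj
    rw [Finset.mem_compl, Finset.mem_filter] at hj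
    have hnot : ¬ (0 < p i j) := fun hlt => hj ⟨Finset.mem_univ j, i, hi, hlt⟩
    exact le_antisymm (not_lt.mp hnot) (hpnn i j)
  have hcompl_card : ∀ v₁ : Finset (Fin R),
      ((((Finset.univ.filter fun j => ∃ i ∈ v₁, 0 < p i j)ᶜ : Finset (Fin S))).card : ℝ)
        = S - ((Finset.univ.filter fun j => ∃ i ∈ v₁, 0 < p i j)).card := by
    intro v₁
    rw [Finset.card_compl]
    have hle : ((Finset.univ.filter fun j => ∃ i ∈ v₁, 0 < p i j)).card ≤ S := by
      simpa using Finset.card_le_univ (Finset.univ.filter fun j => ∃ i ∈ v₁, 0 < p i j)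
    rw [Nat.cast_sub (by simpa using hle)]
    simp
  have key : ∀ v₁ : Finset (Fin R), v₁.Nonempty →
      S * v₁.card ≤ R * (Finset.univ.filter fun j => ∃ i ∈ v₁, 0 < p i j).card := by
    intro v₁ hne
    set N := Finset.univ.filter fun j => ∃ i ∈ v₁, 0 < p i j with hN
    by_cases hv₂ : (Nᶜ : Finset (Fin S)).Nonempty
    · have h := hrect v₁ Nᶜ hne hv₂ (hzero v₁)
      rw [hcompl_card v₁] at h
      have h' : (S:ℝ) * v₁.card ≤ R * N.card := by
        rw [div_add_div _ _ hR0.ne' hS0.ne', div_le_one (by positivity)] at h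
        nlinarith
      exact_mod_cast h'
    · rw [Finset.not_nonempty_iff_eq_empty, Finset.compl_eq_empty_iff] at hv₂
      have hNS : N.card = S := by rw [hv₂]; simp
      have hv₁R : v₁.card ≤ R := by simpa using Finset.card_le_univ v₁
      calc S * v₁.card ≤ S * R := Nat.mul_le_mul_left _ hv₁R
        _ = R * S := Nat.mul_comm _ _
        _ = R * N.card := by rw [hNS]
  have key2 : ∀ (i0 : Fin R) (j0 : Fin S), 0 < p i0 j0 →
      ∀ v₁ : Finset (Fin R), v₁.Nonempty → i0 ∉ v₁ → (∃ i ∈ v₁, 0 < p i j0) →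
      S * v₁.card + 1 ≤ R * (Finset.univ.filter fun j => ∃ i ∈ v₁, 0 < p i j).card := by
    intro i0 j0 h0 v₁ hne hi0 hwit
    set N := Finset.univ.filter fun j => ∃ i ∈ v₁, 0 < p i j with hN
    by_contra hcon
    push_neg at hcon
    have hkey := key v₁ hne
    rw [← hN] at hkey
    have heqnat : S * v₁.card = R * N.card := by omega
    have hv₂ : (Nᶜ : Finset (Fin S)).Nonempty := by
      rw [← Finset.card_pos]
      by_contra hc
      push_neg at hc
      have hc0 : (Nᶜ : Finset (Fin S)).card = 0 := by omega
      rw [Finset.card_eq_zero, Finset.compl_eq_empty_iff] at hc0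
      have hNS : N.card = S := by rw [hc0]; simp
      rw [hNS] at heqnat
      have hv₁R : v₁.card ≤ R := by simpa using Finset.card_le_univ v₁
      have : v₁.card = R := by
        rcases Nat.lt_or_ge v₁.card R with h | h
        · exfalso
          have hlt : S * v₁.card < S * R := mul_lt_mul_of_pos_left h (show 0 < S by omega)
          have hcm : S * R = R * S := Nat.mul_comm _ _
          omega
        · omega
      have : v₁ = Finset.univ := by
        apply Finset.eq_univ_of_card
        simpa using this
      rw [this] at hi0
      exact hi0 (Finset.mem_univ i0)
    have heqreal : (v₁.card : ℝ) / R + ((Nᶜ : Finset (Fin S)).card : ℝ) / S = 1 := by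
      rw [hcompl_card v₁, ← hN]
      have : (S:ℝ) * v₁.card = R * N.card := by exact_mod_cast heqnat
      field_simp
      nlinarith
    have hj0 : j0 ∉ (Nᶜ : Finset (Fin S)) := by
      rw [Finset.mem_compl, not_not, hN]
      simp only [Finset.mem_filter, Finset.mem_univ, true_and]
      exact hwit
    have := heq v₁ Nᶜ hne hv₂ (hzero v₁) heqreal i0 hi0 j0 hj0
    rw [this] at h0
    exact lt_irrefl 0 h0
  -- nonempty support
  have hA : ∃ x : Fin R × Fin S, 0 < p x.1 x.2 := by
    by_contra hc
    push_neg at hc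
    have hz : ∀ i j, p i j = 0 := fun i j => le_antisymm (hc (i, j)) (hpnn i j)
    rw [Finset.sum_congr rfl fun i _ => Finset.sum_congr rfl fun j _ => hz i j] at hpsum
    simp at hpsum
  set A : Finset (Fin R × Fin S) := Finset.univ.filter fun x => 0 < p x.1 x.2 with hAdef
  have hAne : A.Nonempty := by
    obtain ⟨x, hx⟩ := hA
    exact ⟨x, by simp [hAdef, hx]⟩
  have hAc0 : (0:ℝ) < A.card := by exact_mod_cast Finset.card_pos.mpr hAne
  have hQ : ∀ x : Fin R × Fin S, 0 < p x.1 x.2 →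
      ∃ q : Fin R → Fin S → ℝ, (∀ i j, 0 ≤ q i j) ∧ (∀ i, ∑ j, q i j = 1 / R) ∧
        (∀ j, ∑ i, q i j = 1 / S) ∧ (∀ i j, 0 < q i j → 0 < p i j) ∧ 0 < q x.1 x.2 :=
    fun x hx => stmt10_matching R S hR hS p key key2 x.1 x.2 hx
  choose! Q hQ1 hQ2 hQ3 hQ4 hQ5 using hQ
  have hmemA : ∀ x ∈ A, 0 < p x.1 x.2 := fun x hx => (Finset.mem_filter.mp hx).2
  refine ⟨fun i j => (∑ x ∈ A, Q x i j) / A.card, ?_, ?_, ?_, ?_, ?_⟩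
  · intro i j
    apply div_nonneg _ (le_of_lt hAc0)
    exact Finset.sum_nonneg fun x hx => hQ1 x (hmemA x hx) i j
  · -- total sum
    have hrow : ∀ i, ∑ j, (∑ x ∈ A, Q x i j) / (A.card : ℝ) = 1 / R := by
      intro i
      rw [← Finset.sum_div, Finset.sum_comm]
      rw [Finset.sum_congr rfl fun x hx => hQ2 x (hmemA x hx) i]
      rw [Finset.sum_const, nsmul_eq_mul]
      field_simp
    rw [Finset.sum_congr rfl fun i _ => hrow i]
    rw [Finset.sum_const, nsmul_eq_mul]
    simp only [Finset.card_univ, Fintype.card_fin]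
    field_simp
  · intro i
    rw [← Finset.sum_div, Finset.sum_comm]
    rw [Finset.sum_congr rfl fun x hx => hQ2 x (hmemA x hx) i]
    rw [Finset.sum_const, nsmul_eq_mul]
    field_simp
  · intro j
    rw [← Finset.sum_div, Finset.sum_comm]
    rw [Finset.sum_congr rfl fun x hx => hQ3 x (hmemA x hx) j]
    rw [Finset.sum_const, nsmul_eq_mul]
    field_simp
  · intro i j
    constructor
    · intro hq
      by_contra hp
      have hz : ∀ x ∈ A, Q x i j = 0 := by
        intro x hx
        rcases (hQ1 x (hmemA x hx) i j).lt_or_eq with h | h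
        · exact absurd (hQ4 x (hmemA x hx) i j h) hp
        · exact h.symm
      have hsum0 : ∑ x ∈ A, Q x i j = 0 := Finset.sum_eq_zero hz
      simp only [hsum0, zero_div, lt_self_iff_false] at hq
    · intro hp
      have hmem : (i, j) ∈ A := by simp [hAdef, hp]
      apply div_pos _ hAc0
      calc (0:ℝ) < Q (i, j) i j := hQ5 (i, j) hp
        _ ≤ ∑ x ∈ A, Q x i j :=
          Finset.single_le_sum (f := fun x => Q x i j)
            (fun x hx => hQ1 x (hmemA x hx) i j) hmem
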